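/- arXiv:0802.3010 — 2 statements merged into one kernel-verified Lean document; each statement's English description precedes it below -/
import Mathlib

section
/- For every integer k ≥ 2, the family of evaluations {ev(A) : A ∈ L(k)} is ℤ-linearly independent in the free Lie algebra over ℤ on k generators; in particular the evaluation map is injective on L(k) and these (k-1)! elements span a free ℤ-module of rank (k-1)!. -/
/-!
Under the map from the free Lie ring to the free associative ring `ℤ⟨X⟩`, brackets become
commutators, so each tree `t` becomes a noncommutative polynomial whose words are rearrangements
of its leaves. Reading a valid tree from its minimal leaf (`minWord`: expand `[u, v]` as `u v`,
reading `u` from its minimum and `v` from its maximum) or from its maximal leaf (`maxWord`: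
expand it as `v u`) gives a word occurring in `t` with coefficient `±1`, since its first letter
lies on one side of the top bracket only. If `minWord A` occurs in another valid tree `B` with
distinct leaves, the top bracket of `B` must split no later than that of `A`, and recursively so;
hence the shape code `minCode B` is lexicographically smaller than `minCode A`, and the
coefficient matrix is triangular with nonzero diagonal.
-/

/-- Formal expressions: complete binary bracketings with leaves labeled by natural numbers. -/
inductive BTree : Type
  | leaf : ℕ → BTree
  | node : BTree → BTree → BTree
  deriving DecidableEq

namespace BTree

/-- The list of leaf labels, read from left to right. -/
def leaves : BTree → List ℕ
  | leaf i => [i]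
  | node l r => leaves l ++ leaves r

/-- In every bracket `[u,v]`, the minimum index occurs inside `u`
and the maximum index occurs inside `v`. -/
def valid : BTree → Prop
  | leaf _ => True
  | node l r => valid l ∧ valid r ∧
      (∃ a ∈ leaves l, ∀ i ∈ leaves l ++ leaves r, a ≤ i) ∧
      (∃ b ∈ leaves r, ∀ i ∈ leaves l ++ leaves r, i ≤ b)

/-- Membership in `L n`: the leaf labels are exactly `1, …, n`, each occurring
exactly once (in any order), and the min/max condition holds at every bracket. -/
def memL (n : ℕ) (t : BTree) : Prop :=
  (leaves t).Perm (List.range' 1 n) ∧ valid t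

end BTree

namespace BTree

/-- Evaluation of a formal bracketing in the free Lie ring (free Lie algebra
over `ℤ`) on generators indexed by `ℕ`. -/
noncomputable def ev : BTree → FreeLieAlgebra ℤ ℕ
  | leaf i => FreeLieAlgebra.of ℤ i
  | node l r => ⁅ev l, ev r⁆

end BTree

theorem MonoidAlgebra.coeff_mul_of_length_eq {R α : Type*} [Semiring R]
    {x y : MonoidAlgebra R (FreeMonoid α)} {n : ℕ}
    (hx : ∀ u, x.coeff u ≠ 0 → u.length = n) (w : List α) :
    (x * y).coeff (.ofList w) =
      x.coeff (.ofList (w.take n)) * y.coeff (.ofList (w.drop n)) := by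
  classical
  have hsplit : ∀ u ∈ x.coeff.support, (single u (x.coeff u) * y).coeff (.ofList w) =
      if u = .ofList (w.take n) then x.coeff u * y.coeff (.ofList (w.drop n)) else 0 := by
    intro u hu
    split_ifs with h
    · subst h
      refine coeff_single_mul_eq_mul_coeff _ fun v _ => ?_
      rw [← FreeMonoid.toList.injective.eq_iff, ← FreeMonoid.toList.injective.eq_iff]
      simp only [FreeMonoid.toList_mul, FreeMonoid.toList_ofList]
      nth_rw 2 [← w.take_append_drop n]
      exact List.append_right_inj _
    · refine coeff_single_mul_of_forall_mul_ne _ _ fun v hv => h ?_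
      rw [← FreeMonoid.toList.injective.eq_iff] at hv ⊢
      simp only [FreeMonoid.toList_mul, FreeMonoid.toList_ofList] at hv ⊢
      rw [← hv, List.take_left' (hx u (Finsupp.mem_support_iff.mp hu))]
  conv_lhs => rw [← sum_coeff_single x]
  rw [Finsupp.sum, Finset.sum_mul, coeff_sum, Finset.sum_apply', Finset.sum_congr rfl hsplit,
    Finset.sum_ite_eq']
  split_ifs with h
  · rfl
  · rw [Finsupp.notMem_support_iff.mp h, zero_mul]

theorem List.Lex.append_of_length_eq {α : Type*} {r : α → α → Prop} {l₁ l₂ : List α}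
    (h : Lex r l₁ l₂) (hlen : l₁.length = l₂.length) (m₁ m₂ : List α) :
    Lex r (l₁ ++ m₁) (l₂ ++ m₂) := by
  induction h with
  | nil => simp at hlen
  | cons _ ih => exact .cons (ih (by simpa using hlen))
  | rel h => exact .rel h

theorem List.Perm.min?_eq {α : Type*} [LinearOrder α] {l₁ l₂ : List α} (h : l₁.Perm l₂) :
    l₁.min? = l₂.min? := by
  ext x
  simp only [List.min?_eq_some_iff, h.mem_iff]

theorem List.Perm.max?_eq {α : Type*} [LinearOrder α] {l₁ l₂ : List α} (h : l₁.Perm l₂) :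
    l₁.max? = l₂.max? := by
  ext x
  simp only [List.max?_eq_some_iff, h.mem_iff]

theorem List.mem_take_of_head?_eq_some {α : Type*} {l : List α} {a : α} {n : ℕ}
    (h : l.head? = some a) (hn : n ≠ 0) : a ∈ l.take n :=
  List.mem_of_mem_head? (by rw [List.head?_take, if_neg hn, h]; rfl)

theorem linearIndependent_of_triangular {ι κ R M : Type*} [Ring R] [NoZeroDivisors R]
    [AddCommGroup M] [Module R M] [LinearOrder κ] {v : ι → M}
    (f : ι → M →ₗ[R] R) (key : ι → κ)
    (hdiag : ∀ i, f i (v i) ≠ 0) (htri : ∀ i j, f i (v j) ≠ 0 → i = j ∨ key j < key i) :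
    LinearIndependent R v := by
  classical
  rw [linearIndependent_iff']
  intro s g hg
  by_contra! hne
  obtain ⟨i, hi, hmin⟩ :=
    (s.filter (g · ≠ 0)).exists_min_image key (by simpa [Finset.Nonempty] using hne)
  rw [Finset.mem_filter] at hi
  have hsum : ∑ j ∈ s, g j * f i (v j) = g i * f i (v i) := by
    refine Finset.sum_eq_single i (fun j hj hji => ?_) (absurd hi.1)
    by_contra hj0
    obtain ⟨hgj, hfj⟩ := mul_ne_zero_iff.mp hj0
    rcases htri i j hfj with rfl | hlt
    · exact hji rfl
    · exact (hmin j (Finset.mem_filter.mpr ⟨hj, hgj⟩)).not_gt hlt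
  have h0 := congrArg (f i) hg
  simp only [map_sum, map_smul, smul_eq_mul, map_zero, hsum] at h0
  exact mul_ne_zero hi.2 (hdiag i) h0

namespace BTree

theorem leaves_ne_nil (t : BTree) : t.leaves ≠ [] := by
  induction t with
  | leaf i => exact List.cons_ne_nil _ _
  | node l r ihl _ => exact List.append_ne_nil_of_left_ne_nil ihl _

theorem exists_min?_leaves (t : BTree) : ∃ x, t.leaves.min? = some x :=
  Option.isSome_iff_exists.mp (List.isSome_min?_of_ne_nil (leaves_ne_nil t))

theorem exists_max?_leaves (t : BTree) : ∃ x, t.leaves.max? = some x :=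
  Option.isSome_iff_exists.mp (List.isSome_max?_of_ne_nil (leaves_ne_nil t))

theorem min?_leaves_node {l r : BTree} (h : (node l r).valid) :
    (node l r).leaves.min? = l.leaves.min? := by
  obtain ⟨-, -, ⟨a, ha, hamin⟩, -⟩ := h
  obtain ⟨x, hx⟩ := exists_min?_leaves l
  rw [hx, List.min?_eq_some_iff]
  exact ⟨List.mem_append_left _ (List.min?_mem hx),
    fun i hi => ((List.min?_eq_some_iff.mp hx).2 a ha).trans (hamin i hi)⟩

theorem max?_leaves_node {l r : BTree} (h : (node l r).valid) :
    (node l r).leaves.max? = r.leaves.max? := by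
  obtain ⟨-, -, -, ⟨b, hb, hbmax⟩⟩ := h
  obtain ⟨y, hy⟩ := exists_max?_leaves r
  rw [hy, List.max?_eq_some_iff]
  exact ⟨List.mem_append_right _ (List.max?_mem hy),
    fun i hi => (hbmax i hi).trans ((List.max?_eq_some_iff.mp hy).2 b hb)⟩

attribute [local instance] LieRing.ofAssociativeRing

noncomputable def toAssoc :
    FreeLieAlgebra ℤ ℕ →ₗ⁅ℤ⁆ MonoidAlgebra ℤ (FreeMonoid ℕ) :=
  FreeLieAlgebra.lift ℤ fun i => MonoidAlgebra.single (FreeMonoid.of i) 1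

theorem toAssoc_of (i : ℕ) :
    toAssoc (FreeLieAlgebra.of ℤ i) = MonoidAlgebra.single (FreeMonoid.of i) 1 :=
  FreeLieAlgebra.lift_of_apply _ _

noncomputable def coeff (t : BTree) (w : List ℕ) : ℤ := (toAssoc t.ev).coeff (.ofList w)

theorem coeff_leaf (i : ℕ) (w : List ℕ) : (leaf i).coeff w = if w = [i] then 1 else 0 := by
  classical
  rw [coeff, ev, toAssoc_of, MonoidAlgebra.coeff_single, Finsupp.single_apply]
  simp only [← FreeMonoid.toList.injective.eq_iff, FreeMonoid.toList_of, FreeMonoid.toList_ofList,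
    eq_comm]

theorem coeff_node_of_length {l r : BTree}
    (hl : ∀ w, l.coeff w ≠ 0 → w.length = l.leaves.length)
    (hr : ∀ w, r.coeff w ≠ 0 → w.length = r.leaves.length) (w : List ℕ) :
    (node l r).coeff w =
      l.coeff (w.take l.leaves.length) * r.coeff (w.drop l.leaves.length) -
        r.coeff (w.take r.leaves.length) * l.coeff (w.drop r.leaves.length) := by
  rw [coeff, ev, LieHom.map_lie, Ring.lie_def, MonoidAlgebra.coeff_sub, Finsupp.sub_apply,
    MonoidAlgebra.coeff_mul_of_length_eq (fun u hu => hl u.toList hu),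
    MonoidAlgebra.coeff_mul_of_length_eq (fun u hu => hr u.toList hu)]
  rfl

theorem perm_leaves_of_coeff_ne_zero {t : BTree} {w : List ℕ} (h : t.coeff w ≠ 0) :
    w.Perm t.leaves := by
  induction t generalizing w with
  | leaf i =>
    rw [coeff_leaf] at h
    split_ifs at h with hw
    · rw [hw, leaves]
    · exact absurd rfl h
  | node l r ihl ihr =>
    rw [coeff_node_of_length (fun _ h => (ihl h).length_eq) (fun _ h => (ihr h).length_eq)] at h
    rw [leaves]
    by_cases hlr : l.coeff (w.take l.leaves.length) * r.coeff (w.drop l.leaves.length) = 0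
    · rw [hlr, zero_sub, neg_ne_zero] at h
      obtain ⟨hr, hl⟩ := mul_ne_zero_iff.mp h
      simpa using ((ihr hr).append (ihl hl)).trans List.perm_append_comm
    · obtain ⟨hl, hr⟩ := mul_ne_zero_iff.mp hlr
      simpa using (ihl hl).append (ihr hr)

theorem coeff_node (l r : BTree) (w : List ℕ) :
    (node l r).coeff w =
      l.coeff (w.take l.leaves.length) * r.coeff (w.drop l.leaves.length) -
        r.coeff (w.take r.leaves.length) * l.coeff (w.drop r.leaves.length) :=
  coeff_node_of_length (fun _ h => (perm_leaves_of_coeff_ne_zero h).length_eq)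
    (fun _ h => (perm_leaves_of_coeff_ne_zero h).length_eq) w

theorem coeff_take_eq_zero_of_not_mem {t : BTree} {w : List ℕ} {x : ℕ} (hw : w.head? = some x)
    (hx : x ∉ t.leaves) : t.coeff (w.take t.leaves.length) = 0 := by
  by_contra h
  exact hx ((perm_leaves_of_coeff_ne_zero h).subset
    (List.mem_take_of_head?_eq_some hw (leaves_ne_nil t |> List.length_pos_iff.mpr).ne'))

theorem coeff_node_of_not_mem_right {l r : BTree} {w : List ℕ} {x : ℕ} (hw : w.head? = some x)
    (hx : x ∉ r.leaves) :
    (node l r).coeff w = l.coeff (w.take l.leaves.length) * r.coeff (w.drop l.leaves.length) := by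
  rw [coeff_node, coeff_take_eq_zero_of_not_mem hw hx, zero_mul, sub_zero]

theorem coeff_node_of_not_mem_left {l r : BTree} {w : List ℕ} {x : ℕ} (hw : w.head? = some x)
    (hx : x ∉ l.leaves) :
    (node l r).coeff w =
      -(r.coeff (w.take r.leaves.length) * l.coeff (w.drop r.leaves.length)) := by
  rw [coeff_node, coeff_take_eq_zero_of_not_mem hw hx, zero_mul, zero_sub]

theorem lt_or_coeff_ne_zero_of_coeff_mul_ne_zero {s t : BTree} {w₁ w₂ : List ℕ} {z : ℕ}
    (hz : w₂.head? = some z) (hzs : z ∉ s.leaves)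
    (h : s.coeff ((w₁ ++ w₂).take s.leaves.length) *
      t.coeff ((w₁ ++ w₂).drop s.leaves.length) ≠ 0) :
    s.leaves.length < w₁.length ∨
      s.leaves.length = w₁.length ∧ s.coeff w₁ ≠ 0 ∧ t.coeff w₂ ≠ 0 := by
  obtain ⟨hs, ht⟩ := mul_ne_zero_iff.mp h
  rcases lt_trichotomy s.leaves.length w₁.length with hlt | heq | hgt
  · exact .inl hlt
  · rw [List.take_left' heq.symm] at hs
    rw [List.drop_left' heq.symm] at ht
    exact .inr ⟨heq, hs, ht⟩
  · refine absurd ((perm_leaves_of_coeff_ne_zero hs).subset ?_) hzs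
    rw [List.take_append, List.take_of_length_le hgt.le]
    exact List.mem_append_right _ (List.mem_take_of_head?_eq_some hz (by omega))

def readings : BTree → List ℕ × List ℕ
  | leaf i => ([i], [i])
  | node l r => ((readings l).1 ++ (readings r).2, (readings r).2 ++ (readings l).1)

def minWord (t : BTree) : List ℕ := t.readings.1

def maxWord (t : BTree) : List ℕ := t.readings.2

theorem minWord_leaf (i : ℕ) : (leaf i).minWord = [i] := rfl

theorem maxWord_leaf (i : ℕ) : (leaf i).maxWord = [i] := rfl

theorem minWord_node (l r : BTree) : (node l r).minWord = l.minWord ++ r.maxWord := rfl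

theorem maxWord_node (l r : BTree) : (node l r).maxWord = r.maxWord ++ l.minWord := rfl

theorem perm_minWord_maxWord (t : BTree) :
    t.minWord.Perm t.leaves ∧ t.maxWord.Perm t.leaves := by
  induction t with
  | leaf i => exact ⟨.refl _, .refl _⟩
  | node l r ihl ihr =>
    exact ⟨ihl.1.append ihr.2, (ihr.2.append ihl.1).trans List.perm_append_comm⟩

theorem length_minWord (t : BTree) : t.minWord.length = t.leaves.length :=
  (perm_minWord_maxWord t).1.length_eq

theorem length_maxWord (t : BTree) : t.maxWord.length = t.leaves.length :=
  (perm_minWord_maxWord t).2.length_eq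

theorem head?_minWord_maxWord {t : BTree} (ht : t.valid) :
    t.minWord.head? = t.leaves.min? ∧ t.maxWord.head? = t.leaves.max? := by
  induction t with
  | leaf i => exact ⟨rfl, rfl⟩
  | node l r ihl ihr =>
    obtain ⟨x, hx⟩ := exists_min?_leaves l
    obtain ⟨y, hy⟩ := exists_max?_leaves r
    rw [min?_leaves_node ht, max?_leaves_node ht, minWord_node, maxWord_node, List.head?_append,
      List.head?_append, (ihl ht.1).1, (ihr ht.2.1).2, hx, hy]
    exact ⟨rfl, rfl⟩

theorem exists_head?_not_mem_of_leaves_perm {a b u v : BTree} (hA : (node a b).valid)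
    (hB : (node u v).valid) (hnd : (node u v).leaves.Nodup)
    (hperm : (node a b).leaves.Perm (node u v).leaves) :
    (∃ x ∉ v.leaves, a.minWord.head? = some x) ∧
      (∃ y ∉ u.leaves, b.maxWord.head? = some y) := by
  have hdisj := List.disjoint_of_nodup_append hnd
  obtain ⟨x, hx⟩ := exists_min?_leaves u
  obtain ⟨y, hy⟩ := exists_max?_leaves v
  refine ⟨⟨x, hdisj (List.min?_mem hx), ?_⟩,
    ⟨y, fun h => hdisj h (List.max?_mem hy), ?_⟩⟩
  · rw [(head?_minWord_maxWord hA.1).1, ← min?_leaves_node hA, hperm.min?_eq,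
      min?_leaves_node hB, hx]
  · rw [(head?_minWord_maxWord hA.2.1).2, ← max?_leaves_node hA, hperm.max?_eq,
      max?_leaves_node hB, hy]

theorem coeff_minWord_maxWord_ne_zero {t : BTree} (ht : t.valid) (hnd : t.leaves.Nodup) :
    t.coeff t.minWord ≠ 0 ∧ t.coeff t.maxWord ≠ 0 := by
  induction t with
  | leaf i => simp [minWord_leaf, maxWord_leaf, coeff_leaf]
  | node l r ihl ihr =>
    obtain ⟨hl, hr⟩ := ihl ht.1 hnd.of_append_left, ihr ht.2.1 hnd.of_append_right
    obtain ⟨⟨x, hxr, hxl⟩, ⟨y, hyl, hyr⟩⟩ :=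
      exists_head?_not_mem_of_leaves_perm ht ht hnd (.refl _)
    constructor
    · rw [minWord_node,
        coeff_node_of_not_mem_right (by rw [List.head?_append, hxl]; rfl) hxr,
        List.take_left' (length_minWord l), List.drop_left' (length_minWord l)]
      exact mul_ne_zero hl.1 hr.2
    · rw [maxWord_node,
        coeff_node_of_not_mem_left (by rw [List.head?_append, hyr]; rfl) hyl,
        List.take_left' (length_maxWord r), List.drop_left' (length_maxWord r)]
      exact neg_ne_zero.mpr (mul_ne_zero hr.2 hl.1)

/-- The sizes of the first factors of the brackets of `t`, in the order in which `minWord`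
(resp. `maxWord`) expands them; their lexicographic order makes the coefficients triangular. -/
def codes : BTree → List ℕ × List ℕ
  | leaf _ => ([], [])
  | node l r => (l.leaves.length :: ((codes l).1 ++ (codes r).2),
      r.leaves.length :: ((codes r).2 ++ (codes l).1))

def minCode (t : BTree) : List ℕ := t.codes.1

def maxCode (t : BTree) : List ℕ := t.codes.2

theorem minCode_node (l r : BTree) :
    (node l r).minCode = l.leaves.length :: (l.minCode ++ r.maxCode) := rfl

theorem maxCode_node (l r : BTree) :
    (node l r).maxCode = r.leaves.length :: (r.maxCode ++ l.minCode) := rfl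

theorem length_minCode_maxCode (t : BTree) :
    t.minCode.length + 1 = t.leaves.length ∧ t.maxCode.length + 1 = t.leaves.length := by
  induction t with
  | leaf i => exact ⟨rfl, rfl⟩
  | node l r ihl ihr =>
    simp only [minCode_node, maxCode_node, leaves, List.length_cons, List.length_append]
    omega

theorem node_eq_or_minCode_lt {a b u v : BTree} (hlen : u.leaves.length = a.leaves.length)
    (ha : a = u ∨ u.minCode < a.minCode) (hb : b = v ∨ v.maxCode < b.maxCode) :
    node a b = node u v ∨ (node u v).minCode < (node a b).minCode := by
  rw [minCode_node, minCode_node, hlen, List.cons_lt_cons_self]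
  rcases ha with rfl | ha
  · rcases hb with rfl | hb
    · exact .inl rfl
    · exact .inr (List.append_left_lt hb)
  · have := (length_minCode_maxCode u).1.trans (hlen.trans (length_minCode_maxCode a).1.symm)
    exact .inr (List.Lex.append_of_length_eq ha (by omega) _ _)

theorem node_eq_or_maxCode_lt {a b u v : BTree} (hlen : v.leaves.length = b.leaves.length)
    (ha : a = u ∨ u.minCode < a.minCode) (hb : b = v ∨ v.maxCode < b.maxCode) :
    node a b = node u v ∨ (node u v).maxCode < (node a b).maxCode := by
  rw [maxCode_node, maxCode_node, hlen, List.cons_lt_cons_self]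
  rcases hb with rfl | hb
  · rcases ha with rfl | ha
    · exact .inl rfl
    · exact .inr (List.append_left_lt ha)
  · have := (length_minCode_maxCode v).2.trans (hlen.trans (length_minCode_maxCode b).2.symm)
    exact .inr (List.Lex.append_of_length_eq hb (by omega) _ _)

theorem leaves_perm_of_coeff_minWord_ne_zero {A B : BTree} (h : B.coeff A.minWord ≠ 0) :
    A.leaves.Perm B.leaves :=
  (perm_minWord_maxWord A).1.symm.trans (perm_leaves_of_coeff_ne_zero h)

theorem leaves_perm_of_coeff_maxWord_ne_zero {A B : BTree} (h : B.coeff A.maxWord ≠ 0) :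
    A.leaves.Perm B.leaves :=
  (perm_minWord_maxWord A).2.symm.trans (perm_leaves_of_coeff_ne_zero h)

theorem eq_leaf_of_leaves_perm {t : BTree} {i : ℕ} (h : t.leaves.Perm [i]) : t = leaf i := by
  cases t with
  | leaf j => simpa [leaves] using h
  | node l r =>
    have := h.length_eq
    have := List.length_pos_iff.mpr (leaves_ne_nil l)
    have := List.length_pos_iff.mpr (leaves_ne_nil r)
    simp only [leaves, List.length_append, List.length_singleton] at *
    omega

theorem eq_or_code_lt_of_coeff_ne_zero {B : BTree} (hB : B.valid) (hnd : B.leaves.Nodup)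
    {A : BTree} (hA : A.valid) (hperm : A.leaves.Perm B.leaves) :
    (B.coeff A.minWord ≠ 0 → A = B ∨ B.minCode < A.minCode) ∧
      (B.coeff A.maxWord ≠ 0 → A = B ∨ B.maxCode < A.maxCode) := by
  induction B generalizing A with
  | leaf i =>
    have hA := eq_leaf_of_leaves_perm hperm
    exact ⟨fun _ => .inl hA, fun _ => .inl hA⟩
  | node u v ihu ihv =>
    cases A with
    | leaf j => exact absurd (eq_leaf_of_leaves_perm hperm.symm) nofun
    | node a b =>
      obtain ⟨⟨x, hxv, hxa⟩, ⟨y, hyu, hyb⟩⟩ :=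
        exists_head?_not_mem_of_leaves_perm hA hB hnd hperm
      constructor
      · intro h
        rw [minWord_node,
          coeff_node_of_not_mem_right (by rw [List.head?_append, hxa]; rfl) hxv] at h
        rcases lt_or_coeff_ne_zero_of_coeff_mul_ne_zero hyb hyu h with hlt | ⟨hlen, hu, hv⟩
        · rw [length_minWord] at hlt
          exact .inr (List.cons_lt_cons_iff.mpr (.inl hlt))
        · rw [length_minWord] at hlen
          exact node_eq_or_minCode_lt hlen
            ((ihu hB.1 hnd.of_append_left hA.1 (leaves_perm_of_coeff_minWord_ne_zero hu)).1 hu)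
            ((ihv hB.2.1 hnd.of_append_right hA.2.1
              (leaves_perm_of_coeff_maxWord_ne_zero hv)).2 hv)
      · intro h
        rw [maxWord_node, coeff_node_of_not_mem_left (by rw [List.head?_append, hyb]; rfl) hyu,
          neg_ne_zero] at h
        rcases lt_or_coeff_ne_zero_of_coeff_mul_ne_zero hxa hxv h with hlt | ⟨hlen, hv, hu⟩
        · rw [length_maxWord] at hlt
          exact .inr (List.cons_lt_cons_iff.mpr (.inl hlt))
        · rw [length_maxWord] at hlen
          exact node_eq_or_maxCode_lt hlen
            ((ihu hB.1 hnd.of_append_left hA.1 (leaves_perm_of_coeff_minWord_ne_zero hu)).1 hu)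
            ((ihv hB.2.1 hnd.of_append_right hA.2.1
              (leaves_perm_of_coeff_maxWord_ne_zero hv)).2 hv)

noncomputable def wordCoeff (w : List ℕ) : FreeLieAlgebra ℤ ℕ →ₗ[ℤ] ℤ :=
  Finsupp.lapply (FreeMonoid.ofList w) ∘ₗ
    (MonoidAlgebra.coeffLinearEquiv ℤ).toLinearMap ∘ₗ toAssoc.toLinearMap

theorem linearIndepOn_ev : LinearIndepOn ℤ ev {t | t.valid ∧ t.leaves.Nodup} :=
  linearIndependent_of_triangular (fun A => wordCoeff A.1.minWord) (fun A => A.1.minCode)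
    (fun A => (coeff_minWord_maxWord_ne_zero A.2.1 A.2.2).1)
    (fun A B h => ((eq_or_code_lt_of_coeff_ne_zero B.2.1 B.2.2 A.2.1
      (leaves_perm_of_coeff_minWord_ne_zero h)).1 h).imp Subtype.ext id)

end BTree

theorem linearIndependent_ev_L_general (k : ℕ) :
    LinearIndependent ℤ (fun t : {t : BTree // BTree.memL k t} => BTree.ev t.1) ∧
    Set.InjOn BTree.ev {t : BTree | BTree.memL k t} := by
  have h : LinearIndepOn ℤ BTree.ev {t | BTree.memL k t} :=
    BTree.linearIndepOn_ev.mono fun t ht => ⟨ht.2, ht.1.nodup_iff.mpr List.nodup_range'⟩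
  exact ⟨h, h.injOn⟩

/-- For every `k ≥ 2`, the family of evaluations `{ev A : A ∈ L(k)}` is
`ℤ`-linearly independent in the free Lie algebra over `ℤ`; in particular the
evaluation map is injective on `L(k)`. -/
theorem linearIndependent_ev_L (k : ℕ) (hk : 2 ≤ k) :
    LinearIndependent ℤ (fun t : {t : BTree // BTree.memL k t} => BTree.ev t.1) ∧
    Set.InjOn BTree.ev {t : BTree | BTree.memL k t} :=
  linearIndependent_ev_L_general k
end

section
/- Let F(X) = Σ_{n≥1} (n-1)!·X^n ∈ ℚ[[X]], let F^{<−1>} be its compositional inverse, and for n ≥ 2 set b_n = −[X^n] F^{<−1>}(X). Then b_2 = 1 and for all n ≥ 3 one has b_n = Σ_{k=2}^{n-2} ((k+1)·b_{k+1} + b_k)·b_{n-k}. -/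
/-- The generating series `F(X) = Σ_{n≥1} (n-1)!·X^n ∈ ℚ[[X]]`. -/
noncomputable def F : PowerSeries ℚ :=
  PowerSeries.mk fun n => if n = 0 then 0 else ((n - 1).factorial : ℚ)

/-- `G` is the compositional inverse `F^{<-1>}` of `F`: it has zero constant
term and `F(G(X)) = X`.  Since `G` has zero constant coefficient, the
coefficient of `X^n` in `F(G(X)) = Σ_{m≥1} (m-1)!·G^m` is the finite sum
`Σ_{m=1}^{n} (m-1)!·[X^n]G^m`, so the equation `F(G(X)) = X` is expressed
coefficientwise by the finite sums below. -/
def IsCompInvOfF (G : PowerSeries ℚ) : Prop :=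
  PowerSeries.constantCoeff G = 0 ∧
    ∀ n : ℕ,
      ∑ m ∈ Finset.Icc 1 n, ((m - 1).factorial : ℚ) * PowerSeries.coeff n (G ^ m) =
        PowerSeries.coeff n (PowerSeries.X : PowerSeries ℚ)

/-!
Since `x² F'(x) = Σ n!·x^{n+1} = F(x) - x`, substituting `x = G` gives `G² F'(G) = X - G`,
while the chain rule applied to `F(G) = X` gives `F'(G)·G' = 1`. Multiplying, `(X - G)·G' = G²`.
For `B = X - G = Σ_{n≥2} b_n X^n` this reads `B = X² + (B' + B - 2X)·B`, and `B' + B - 2X` has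
coefficients `(k+1)·b_{k+1} + b_k` from degree 2 on, which is the recursion.
-/

open PowerSeries Finset

namespace PowerSeries

variable {R : Type*} [CommRing R]

theorem coeff_pow_eq_zero_of_lt {g : R⟦X⟧} (hg : constantCoeff g = 0) {n d : ℕ} (h : n < d) :
    coeff n (g ^ d) = 0 :=
  coeff_of_lt_order n <| (Nat.cast_lt.mpr h).trans_le (le_order_pow_of_constantCoeff_eq_zero d hg)

theorem coeff_subst_eq_sum_range {f g : R⟦X⟧} (hg : constantCoeff g = 0) (n : ℕ) :
    coeff n (f.subst g) = ∑ d ∈ range (n + 1), coeff d f * coeff n (g ^ d) := by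
  rw [coeff_subst' (HasSubst.of_constantCoeff_zero' hg)]
  refine finsum_eq_sum_of_support_subset _ fun d hd => ?_
  by_contra hdn
  rw [coe_range, Set.mem_Iio, not_lt] at hdn
  exact hd (by simp [coeff_pow_eq_zero_of_lt hg (Nat.lt_of_succ_le hdn)])

theorem coeff_mul_eq_sum_Icc {P Q : R⟦X⟧} {p q : ℕ} (hP : ∀ i < p, coeff i P = 0)
    (hQ : ∀ j < q, coeff j Q = 0) (n : ℕ) :
    coeff n (P * Q) = ∑ k ∈ Icc p (n - q), coeff k P * coeff (n - k) Q := by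
  rw [coeff_mul, Nat.sum_antidiagonal_eq_sum_range_succ (fun i j => coeff i P * coeff j Q)]
  refine (sum_subset (fun k hk => by simp at hk ⊢; omega) fun k hkn hk => ?_).symm
  simp only [mem_range, mem_Icc, not_and_or, not_le] at hkn hk
  rcases hk with hk | hk
  · rw [hP k hk, zero_mul]
  · rw [hQ (n - k) (by omega), mul_zero]

theorem sub_mul_derivative_eq_sq {f g : R⟦X⟧} (hf : f = X + X ^ 2 * d⁄dX R f)
    (hg : constantCoeff g = 0) (hfg : f.subst g = X) : (X - g) * d⁄dX R g = g ^ 2 := by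
  have hsub := HasSubst.of_constantCoeff_zero' hg
  have hX : X = g + g ^ 2 * (d⁄dX R f).subst g := by
    conv_lhs => rw [← hfg, hf]
    rw [subst_add hsub, subst_mul hsub, subst_pow hsub, subst_X hsub]
  have hchain : (d⁄dX R f).subst g * d⁄dX R g = 1 := by
    rw [← derivative_subst hsub, hfg, derivative_X]
  linear_combination (d⁄dX R g) * hX + g ^ 2 * hchain

theorem coeff_two_and_coeff_eq_sum_of_eq_X_sq_add_mul {B : R⟦X⟧}
    (hB : B = X ^ 2 + (d⁄dX R B + B - 2 • X) * B) (h0 : coeff 0 B = 0) (h1 : coeff 1 B = 0) :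
    coeff 2 B = 1 ∧ ∀ n, 3 ≤ n →
      coeff n B =
        ∑ k ∈ Icc 2 (n - 2), ((k + 1 : R) * coeff (k + 1) B + coeff k B) * coeff (n - k) B := by
  set C := d⁄dX R B + B - 2 • X with hC
  have hC_coeff (k : ℕ) :
      coeff k C = (k + 1) * coeff (k + 1) B + coeff k B - if k = 1 then 2 else 0 := by
    rw [hC, map_sub, map_add, map_nsmul, coeff_derivative, coeff_X]
    split_ifs <;> simp [mul_comm]
  have hB_low : ∀ j < 2, coeff j B = 0 := fun j hj => by interval_cases j <;> assumption
  have h2 : coeff 2 B = 1 := by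
    have hC0 : ∀ j < 1, coeff j C = 0 := fun j hj => by
      simp [show j = 0 by omega, hC_coeff, h0, h1]
    have h := congrArg (coeff 2) hB
    rwa [map_add, coeff_mul_eq_sum_Icc hC0 hB_low, coeff_X_pow_self, Icc_eq_empty (by omega),
      sum_empty, add_zero] at h
  have hC_low : ∀ j < 2, coeff j C = 0 := fun j hj => by
    interval_cases j <;> norm_num [hC_coeff, h0, h1, h2]
  refine ⟨h2, fun n hn => ?_⟩
  conv_lhs => rw [hB]
  rw [map_add, coeff_X_pow, if_neg (by omega), zero_add, coeff_mul_eq_sum_Icc hC_low hB_low]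
  refine sum_congr rfl fun k hk => ?_
  rw [hC_coeff, if_neg (by simp at hk; omega), sub_zero]

end PowerSeries

theorem F_eq_X_add_X_sq_mul_derivative : F = X + X ^ 2 * d⁄dX ℚ F := by
  ext n
  rcases n with _ | _ | m
  · simp [F]
  · simp [F, coeff_X, coeff_X_pow_mul']
  · rw [show m + 1 + 1 = m + 2 by rfl, map_add, coeff_X_pow_mul, coeff_derivative]
    simp [F, coeff_X, Nat.factorial_succ]
    ring

namespace IsCompInvOfF

variable {G : PowerSeries ℚ}

theorem subst_eq_X (hG : IsCompInvOfF G) : F.subst G = X := by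
  ext n
  rw [coeff_subst_eq_sum_range hG.1, ← hG.2 n]
  calc ∑ d ∈ range (n + 1), coeff d F * coeff n (G ^ d)
      = ∑ d ∈ Icc 1 n, coeff d F * coeff n (G ^ d) :=
        (sum_subset (fun d hd => by simp at hd ⊢; omega) fun d hdn hd => by
          obtain rfl : d = 0 := by simp at hdn hd; omega
          simp [F]).symm
    _ = _ := sum_congr rfl fun d hd => by
        simp [F, show d ≠ 0 by simp at hd; omega]

theorem coeff_one (hG : IsCompInvOfF G) : coeff 1 G = 1 := by
  simpa [coeff_X] using hG.2 1

theorem X_sub_eq_X_sq_add_mul (hG : IsCompInvOfF G) :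
    X - G = X ^ 2 + (d⁄dX ℚ (X - G) + (X - G) - 2 • X) * (X - G) := by
  have h := sub_mul_derivative_eq_sq F_eq_X_add_X_sq_mul_derivative hG.1 hG.subst_eq_X
  rw [map_sub, derivative_X]
  linear_combination h

end IsCompInvOfF

/-- With `b_n = -[X^n] F^{<-1>}(X)`, one has `b_2 = 1` and, for all `n ≥ 3`,
`b_n = Σ_{k=2}^{n-2} ((k+1)·b_{k+1} + b_k)·b_{n-k}` (for `n = 3` the sum is
empty, so `b_3 = 0`). -/
theorem b_recursion (G : PowerSeries ℚ) (hG : IsCompInvOfF G)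
    (b : ℕ → ℚ) (hb : ∀ n, b n = -(PowerSeries.coeff n G)) :
    b 2 = 1 ∧
      ∀ n : ℕ, 3 ≤ n →
        b n = ∑ k ∈ Finset.Icc 2 (n - 2), ((k + 1 : ℚ) * b (k + 1) + b k) * b (n - k) := by
  have hb_coeff : ∀ n, 2 ≤ n → b n = coeff n (X - G) := fun n hn => by
    simp [hb, coeff_X, show n ≠ 1 by omega]
  obtain ⟨h2, hrec⟩ := coeff_two_and_coeff_eq_sum_of_eq_X_sq_add_mul hG.X_sub_eq_X_sq_add_mul
    (by simp [hG.1]) (by simp [hG.coeff_one])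
  refine ⟨by rw [hb_coeff 2 le_rfl, h2], fun n hn => ?_⟩
  rw [hb_coeff n (by omega), hrec n hn]
  refine sum_congr rfl fun k hk => ?_
  rw [mem_Icc] at hk
  rw [hb_coeff k hk.1, hb_coeff (k + 1) (by omega), hb_coeff (n - k) (by omega)]
end
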